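/- Let Σ* be an invertible diagonal r×r real matrix, W an r×r real matrix, and E an n×r real matrix. Suppose Û = U*Σ*W + E where U* is an n×r matrix with orthonormal columns, and let Û = U R be such that R² = ÛᵀÛ (so U has orthonormal columns when R is invertible). If σ_min(Σ*)·σ_min(W) > ‖Σ*‖₂·‖E(Σ*)⁻¹‖₂, then ‖(I − U*(U*)ᵀ)U‖₂ ≤ ‖E(Σ*)⁻¹‖₂ / ((σ_min(Σ*)/‖Σ*‖₂)·σ_min(W) − ‖E(Σ*)⁻¹‖₂). -/

import Mathlib

open Matrix

/-- Spectral (operator) norm of a real matrix. -/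
noncomputable def sNorm {n r : ℕ} (A : Matrix (Fin n) (Fin r) ℝ) : ℝ :=
  ‖(LinearMap.toContinuousLinearMap (Matrix.toEuclideanLin A))‖

/-- Smallest singular value of a real matrix. -/
noncomputable def sMin {n r : ℕ} (A : Matrix (Fin n) (Fin r) ℝ) : ℝ :=
  ⨅ x : Metric.sphere (0 : EuclideanSpace ℝ (Fin r)) 1, ‖Matrix.toEuclideanLin A x‖


/-! Write `e = ‖E Σ*⁻¹‖₂` and `c = σ_min(Σ*) σ_min(W) - ‖Σ*‖₂ e > 0`. The projection
`P = I - U* U*ᵀ` annihilates the signal `U* Σ* W`, so `P U = P (E Σ*⁻¹) Σ* R⁻¹` and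
`‖P U‖₂ ≤ e ‖Σ*‖₂ ‖R⁻¹‖₂`. Since `R` is symmetric, `RᵀR = ÛᵀÛ`, hence
`‖R z‖ = ‖Û z‖ ≥ ‖U* Σ* W z‖ - ‖(E Σ*⁻¹) Σ* z‖ ≥ c ‖z‖`, i.e. `‖R⁻¹‖₂ ≤ c⁻¹`. -/

open scoped Matrix.Norms.L2Operator

namespace Matrix

variable {l m n : Type*} [Fintype m] [DecidableEq m] [Fintype n] [DecidableEq n]

lemma toEuclideanLin_mul_apply (A : Matrix l m ℝ) (B : Matrix m n ℝ) (x : EuclideanSpace ℝ n) :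
    toEuclideanLin (A * B) x = toEuclideanLin A (toEuclideanLin B x) := by
  rw [toLpLin_mul_same, LinearMap.comp_apply]

lemma norm_toEuclideanLin_sq (A : Matrix m n ℝ) (x : EuclideanSpace ℝ n) :
    ‖toEuclideanLin A x‖ ^ 2 = inner ℝ x (toEuclideanLin (Aᵀ * A) x) := by
  rw [toEuclideanLin_mul_apply, ← conjTranspose_eq_transpose_of_trivial,
    toEuclideanLin_conjTranspose_eq_adjoint, LinearMap.adjoint_inner_right,
    real_inner_self_eq_norm_sq]

lemma norm_toEuclideanLin_eq_of_transpose_mul_self_eq [Fintype l] [DecidableEq l]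
    {A : Matrix m n ℝ} {B : Matrix l n ℝ} (h : Aᵀ * A = Bᵀ * B) (x : EuclideanSpace ℝ n) :
    ‖toEuclideanLin A x‖ = ‖toEuclideanLin B x‖ := by
  have hsq := norm_toEuclideanLin_sq A x
  rw [h, ← norm_toEuclideanLin_sq] at hsq
  exact (sq_eq_sq₀ (norm_nonneg _) (norm_nonneg _)).1 hsq

lemma norm_toEuclideanLin_of_transpose_mul_self_eq_one {A : Matrix m n ℝ}
    (h : Aᵀ * A = 1) (x : EuclideanSpace ℝ n) : ‖toEuclideanLin A x‖ = ‖x‖ := by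
  rw [norm_toEuclideanLin_eq_of_transpose_mul_self_eq (B := (1 : Matrix n n ℝ))
    (by simpa using h), toLpLin_one, LinearMap.id_apply]

lemma one_sub_mul_transpose_mul_self {α : Type*} [CommRing α] {U : Matrix m n α}
    (hU : Uᵀ * U = 1) : (1 - U * Uᵀ) * U = 0 := by
  rw [Matrix.sub_mul, Matrix.one_mul, Matrix.mul_assoc, hU, Matrix.mul_one, sub_self]

lemma transpose_mul_self_one_sub_mul_transpose {α : Type*} [CommRing α] {U : Matrix m n α}
    (hU : Uᵀ * U = 1) : (1 - U * Uᵀ)ᵀ * (1 - U * Uᵀ) = 1 - U * Uᵀ := by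
  have hidem : U * Uᵀ * (U * Uᵀ) = U * Uᵀ := by
    rw [Matrix.mul_assoc, ← Matrix.mul_assoc Uᵀ, hU, Matrix.one_mul]
  rw [transpose_sub, transpose_one, transpose_mul, transpose_transpose, Matrix.sub_mul,
    Matrix.one_mul, Matrix.mul_sub, Matrix.mul_one, hidem, sub_self, sub_zero]

end Matrix

section SpectralNorm

variable {a b c : ℕ}

lemma sNorm_eq_l2_opNorm (A : Matrix (Fin a) (Fin b) ℝ) : sNorm A = ‖A‖ := rfl

lemma sNorm_nonneg (A : Matrix (Fin a) (Fin b) ℝ) : 0 ≤ sNorm A := norm_nonneg _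

lemma sNorm_mul_le (A : Matrix (Fin a) (Fin b) ℝ) (B : Matrix (Fin b) (Fin c) ℝ) :
    sNorm (A * B) ≤ sNorm A * sNorm B :=
  l2_opNorm_mul A B

lemma norm_toEuclideanLin_le_sNorm_mul (A : Matrix (Fin a) (Fin b) ℝ)
    (x : EuclideanSpace ℝ (Fin b)) : ‖toEuclideanLin A x‖ ≤ sNorm A * ‖x‖ :=
  (LinearMap.toContinuousLinearMap (toEuclideanLin A)).le_opNorm x

lemma sNorm_le_of_forall_norm_le (A : Matrix (Fin a) (Fin b) ℝ) {M : ℝ} (hM : 0 ≤ M)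
    (h : ∀ x, ‖toEuclideanLin A x‖ ≤ M * ‖x‖) : sNorm A ≤ M :=
  ContinuousLinearMap.opNorm_le_bound _ hM h

lemma sNorm_le_one_of_transpose_mul_self_eq {P : Matrix (Fin a) (Fin a) ℝ} (hP : Pᵀ * P = P) :
    sNorm P ≤ 1 := by
  have h := l2_opNorm_conjTranspose_mul_self P
  rw [conjTranspose_eq_transpose_of_trivial, hP] at h
  rw [sNorm_eq_l2_opNorm]
  nlinarith [norm_nonneg P]

lemma sMin_nonneg (A : Matrix (Fin a) (Fin b) ℝ) : 0 ≤ sMin A :=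
  Real.iInf_nonneg fun _ => norm_nonneg _

lemma sMin_le_norm_toEuclideanLin (A : Matrix (Fin a) (Fin b) ℝ) {x : EuclideanSpace ℝ (Fin b)}
    (hx : ‖x‖ = 1) : sMin A ≤ ‖toEuclideanLin A x‖ :=
  ciInf_le (f := fun x : Metric.sphere (0 : EuclideanSpace ℝ (Fin b)) 1 => ‖toEuclideanLin A x‖)
    ⟨0, by rintro _ ⟨y, rfl⟩; exact norm_nonneg _⟩ ⟨x, mem_sphere_zero_iff_norm.2 hx⟩

lemma sMin_mul_norm_le (A : Matrix (Fin a) (Fin b) ℝ) (x : EuclideanSpace ℝ (Fin b)) :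
    sMin A * ‖x‖ ≤ ‖toEuclideanLin A x‖ := by
  rcases eq_or_ne x 0 with rfl | hx
  · simp
  have hx' : 0 < ‖x‖ := norm_pos_iff.2 hx
  have h := sMin_le_norm_toEuclideanLin A (x := ‖x‖⁻¹ • x) (by simp [norm_smul, hx'.ne'])
  rw [map_smul, norm_smul, norm_inv, norm_norm, inv_mul_eq_div, le_div_iff₀ hx'] at h
  exact h

lemma sMin_le_sNorm (A : Matrix (Fin a) (Fin b) ℝ) : sMin A ≤ sNorm A := by
  rcases isEmpty_or_nonempty (Metric.sphere (0 : EuclideanSpace ℝ (Fin b)) 1) with h | ⟨x, hx⟩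
  · exact (Real.iInf_of_isEmpty _).trans_le (sNorm_nonneg A)
  · rw [mem_sphere_zero_iff_norm] at hx
    simpa [hx] using (sMin_le_norm_toEuclideanLin A hx).trans
      (norm_toEuclideanLin_le_sNorm_mul A x)

lemma sNorm_inv_le_of_forall_le_norm {R : Matrix (Fin a) (Fin a) ℝ} (hR : IsUnit R.det)
    {c : ℝ} (hc : 0 < c) (h : ∀ z, c * ‖z‖ ≤ ‖toEuclideanLin R z‖) : sNorm R⁻¹ ≤ c⁻¹ := by
  refine sNorm_le_of_forall_norm_le _ (inv_nonneg.2 hc.le) fun y => ?_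
  have hy : toEuclideanLin R (toEuclideanLin R⁻¹ y) = y := by
    rw [← toEuclideanLin_mul_apply, mul_nonsing_inv R hR, toLpLin_one, LinearMap.id_apply]
  rw [inv_mul_eq_div, le_div_iff₀' hc]
  simpa [hy] using h (toEuclideanLin R⁻¹ y)

end SpectralNorm

lemma le_norm_toEuclideanLin_mul_mul_add {n r : ℕ} {Ustar : Matrix (Fin n) (Fin r) ℝ}
    (hUstar : Ustarᵀ * Ustar = 1) {S : Matrix (Fin r) (Fin r) ℝ} (hS : IsUnit S.det)
    (W : Matrix (Fin r) (Fin r) ℝ) (E : Matrix (Fin n) (Fin r) ℝ) (z : EuclideanSpace ℝ (Fin r)) :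
    (sMin S * sMin W - sNorm S * sNorm (E * S⁻¹)) * ‖z‖ ≤
      ‖toEuclideanLin (Ustar * S * W + E) z‖ := by
  have hsignal : sMin S * sMin W * ‖z‖ ≤ ‖toEuclideanLin (Ustar * S * W) z‖ := by
    rw [toEuclideanLin_mul_apply, toEuclideanLin_mul_apply,
      norm_toEuclideanLin_of_transpose_mul_self_eq_one hUstar, mul_assoc]
    exact (mul_le_mul_of_nonneg_left (sMin_mul_norm_le W z) (sMin_nonneg S)).trans
      (sMin_mul_norm_le S _)
  have hnoise : ‖toEuclideanLin E z‖ ≤ sNorm (E * S⁻¹) * (sNorm S * ‖z‖) :=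
    calc ‖toEuclideanLin E z‖ = ‖toEuclideanLin (E * S⁻¹) (toEuclideanLin S z)‖ := by
          rw [← toEuclideanLin_mul_apply, Matrix.mul_assoc, nonsing_inv_mul S hS, Matrix.mul_one]
      _ ≤ sNorm (E * S⁻¹) * ‖toEuclideanLin S z‖ := norm_toEuclideanLin_le_sNorm_mul _ _
      _ ≤ sNorm (E * S⁻¹) * (sNorm S * ‖z‖) :=
          mul_le_mul_of_nonneg_left (norm_toEuclideanLin_le_sNorm_mul S z) (sNorm_nonneg _)
  have htri := norm_sub_le_norm_add (toEuclideanLin (Ustar * S * W) z) (toEuclideanLin E z)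
  rw [map_add, LinearMap.add_apply]
  linarith

theorem stmt0_general {n r : ℕ}
    (Ustar : Matrix (Fin n) (Fin r) ℝ) (S W : Matrix (Fin r) (Fin r) ℝ)
    (E : Matrix (Fin n) (Fin r) ℝ)
    (hUstar : Ustarᵀ * Ustar = 1)
    (hSinv : IsUnit S.det)
    (Uhat : Matrix (Fin n) (Fin r) ℝ) (hUhat : Uhat = Ustar * S * W + E)
    (R : Matrix (Fin r) (Fin r) ℝ)
    (hRpsd : R.PosSemidef) (hR2 : R * R = Uhatᵀ * Uhat) (hRinv : IsUnit R.det)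
    (U : Matrix (Fin n) (Fin r) ℝ) (hU : U = Uhat * R⁻¹)
    (hgap : sNorm S * sNorm (E * S⁻¹) < sMin S * sMin W) :
    sNorm ((1 - Ustar * Ustarᵀ) * U) ≤
      sNorm (E * S⁻¹) / ((sMin S / sNorm S) * sMin W - sNorm (E * S⁻¹)) := by
  set P := 1 - Ustar * Ustarᵀ
  set e := sNorm (E * S⁻¹)
  set c := sMin S * sMin W - sNorm S * e
  have hc : 0 < c := sub_pos.2 hgap
  have hSmin : 0 < sMin S := pos_of_mul_pos_left
    ((mul_nonneg (sNorm_nonneg S) (sNorm_nonneg _)).trans_lt hgap) (sMin_nonneg W)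
  have hSnorm : 0 < sNorm S := hSmin.trans_le (sMin_le_sNorm S)
  have he : 0 ≤ e := sNorm_nonneg _
  have hPU : P * U = P * (E * S⁻¹) * S * R⁻¹ := by
    rw [hU, hUhat, ← Matrix.mul_assoc, Matrix.mul_add, ← Matrix.mul_assoc, ← Matrix.mul_assoc,
      one_sub_mul_transpose_mul_self hUstar]
    simp [Matrix.mul_assoc, nonsing_inv_mul S hSinv]
  have hR : ∀ z, c * ‖z‖ ≤ ‖toEuclideanLin R z‖ := fun z => by
    have hRR : Rᵀ * R = Uhatᵀ * Uhat := by
      rw [← conjTranspose_eq_transpose_of_trivial, hRpsd.isHermitian.eq, hR2]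
    rw [norm_toEuclideanLin_eq_of_transpose_mul_self_eq hRR, hUhat]
    exact le_norm_toEuclideanLin_mul_mul_add hUstar hSinv W E z
  have hPnorm : sNorm P ≤ 1 :=
    sNorm_le_one_of_transpose_mul_self_eq (transpose_mul_self_one_sub_mul_transpose hUstar)
  have hRinvNorm : sNorm R⁻¹ ≤ c⁻¹ := sNorm_inv_le_of_forall_le_norm hRinv hc hR
  calc sNorm (P * U) ≤ sNorm (P * (E * S⁻¹) * S) * sNorm R⁻¹ := hPU ▸ sNorm_mul_le _ _
    _ ≤ sNorm P * e * sNorm S * sNorm R⁻¹ := by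
        gcongr
        · exact sNorm_nonneg _
        · exact (sNorm_mul_le _ _).trans
            (mul_le_mul_of_nonneg_right (sNorm_mul_le _ _) (sNorm_nonneg _))
    _ ≤ 1 * e * sNorm S * c⁻¹ := by
        gcongr
        exact sNorm_nonneg _
    _ = e / ((sMin S / sNorm S) * sMin W - e) := by
        simp only [c]
        field_simp

theorem stmt0 {n r : ℕ}
    (Ustar : Matrix (Fin n) (Fin r) ℝ) (S W : Matrix (Fin r) (Fin r) ℝ)
    (E : Matrix (Fin n) (Fin r) ℝ)
    (hUstar : Ustarᵀ * Ustar = 1)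
    (hdiag : S.IsDiag) (hSinv : IsUnit S.det)
    (Uhat : Matrix (Fin n) (Fin r) ℝ) (hUhat : Uhat = Ustar * S * W + E)
    (R : Matrix (Fin r) (Fin r) ℝ)
    (hRpsd : R.PosSemidef) (hR2 : R * R = Uhatᵀ * Uhat) (hRinv : IsUnit R.det)
    (U : Matrix (Fin n) (Fin r) ℝ) (hU : U = Uhat * R⁻¹)
    (hgap : sNorm S * sNorm (E * S⁻¹) < sMin S * sMin W) :
    sNorm ((1 - Ustar * Ustarᵀ) * U) ≤
      sNorm (E * S⁻¹) / ((sMin S / sNorm S) * sMin W - sNorm (E * S⁻¹)) :=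
  stmt0_general Ustar S W E hUstar hSinv Uhat hUhat R hRpsd hR2 hRinv U hU hgap
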